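/- arXiv:2205.09475 — 3 statements merged into one kernel-verified Lean document; each statement's English description precedes it below -/
import Mathlib

section
/- For every odd n ≥ 3, 1 + a_n(μ) = (a_{(n−1)/2}(μ) − a_{(n−3)/2}(μ)) · (a_{(n+1)/2}(μ) + a_{(n−1)/2}(μ)). -/
/-
`a μ n` is the Chebyshev polynomial of the second kind `U_n` evaluated at `1 - μ`, so it obeys the
addition formula `a (m + n + 2) = a (m + 1) a (n + 1) - a m a n` and the Cassini identity
`a (k + 1)² - a k a (k + 2) = 1`. For `n = 2k + 3` the addition formula splits `a n` into products
of terms of index near `n / 2`, and expanding the right-hand side leaves exactly the Cassini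
expression, which accounts for the `1`.
-/

noncomputable def a (μ : ℝ) : ℕ → ℝ
  | 0 => 1
  | 1 => 2 * (1 - μ)
  | n + 2 => 2 * (1 - μ) * a μ (n + 1) - a μ n

lemma a_add_two (μ : ℝ) (n : ℕ) : a μ (n + 2) = 2 * (1 - μ) * a μ (n + 1) - a μ n := rfl

lemma a_add_add_two (μ : ℝ) (m n : ℕ) :
    a μ (m + n + 2) = a μ (m + 1) * a μ (n + 1) - a μ m * a μ n := by
  induction n using Nat.twoStepInduction with
  | zero => simp only [a]; ring
  | one => simp only [a]; ring
  | more n ih ih' =>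
    rw [show m + (n + 2) + 2 = m + n + 2 + 2 by omega, a_add_two,
      show m + n + 2 + 1 = m + (n + 1) + 2 by omega, ih', ih, a_add_two μ (n + 1), a_add_two μ n]
    ring

lemma a_cassini (μ : ℝ) (k : ℕ) : a μ (k + 1) ^ 2 - a μ k * a μ (k + 2) = 1 := by
  induction k with
  | zero => simp only [a]; ring
  | succ k ih =>
    rw [← ih, a_add_two μ (k + 1), a_add_two μ k]
    ring

lemma one_add_a_odd (μ : ℝ) (k : ℕ) :
    1 + a μ (2 * k + 3) = (a μ (k + 1) - a μ k) * (a μ (k + 2) + a μ (k + 1)) := by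
  rw [← a_cassini μ k, show 2 * k + 3 = (k + 1) + k + 2 by omega, a_add_add_two]
  ring

theorem stmt8 (n : ℕ) (hn : 3 ≤ n) (hodd : Odd n) (μ : ℝ) :
    1 + a μ n = (a μ ((n - 1) / 2) - a μ ((n - 3) / 2)) * (a μ ((n + 1) / 2) + a μ ((n - 1) / 2)) := by
  obtain ⟨k, rfl⟩ : ∃ k, n = 2 * k + 3 := by
    obtain ⟨m, rfl⟩ := hodd
    exact ⟨m - 1, by omega⟩
  rw [show (2 * k + 3 - 1) / 2 = k + 1 by omega, show (2 * k + 3 - 3) / 2 = k by omega,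
    show (2 * k + 3 + 1) / 2 = k + 2 by omega]
  exact one_add_a_odd μ k
end

section
/- Let n ≥ 3 be odd and let μ ∈ ℝ satisfy a_{(n−1)/2}(μ) + a_{(n−3)/2}(μ) = 0. Then a_{n−1}(μ) = 0 and a_{n−2}(μ) = −1. -/
open Polynomial Polynomial.Chebyshev

namespace Polynomial.Chebyshev

variable (R : Type*) [CommRing R]

theorem S_two_mul_add_one_and_S_two_mul_add_two (n : ℕ) :
    S R (2 * n + 1) = 2 * S R n * S R (n + 1) - X * S R n ^ 2 ∧
      S R (2 * n + 2) = S R (n + 1) ^ 2 - S R n ^ 2 := by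
  induction n with
  | zero => simp [S_two]; ring
  | succ n ih =>
    obtain ⟨h_odd, h_even⟩ := ih
    have h_next : S R (n + 1 + 1) = X * S R (n + 1) - S R n := by
      rw [S_add_one, add_sub_cancel_right]
    have h_odd' : S R (2 * n + 3) = X * S R (n + 1) ^ 2 - 2 * S R n * S R (n + 1) := by
      rw [show (2 * n + 3 : ℤ) = 2 * n + 1 + 2 by ring, S_add_two,
        show (2 * n + 1 + 1 : ℤ) = 2 * n + 2 by ring, h_even, h_odd]
      ring
    push_cast
    rw [show (2 * (n + 1) + 1 : ℤ) = 2 * n + 3 by ring,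
      show (2 * (n + 1) + 2 : ℤ) = 2 * n + 2 + 2 by ring, S_add_two,
      show (2 * n + 2 + 1 : ℤ) = 2 * n + 3 by ring, h_odd', h_even, h_next]
    constructor <;> ring

end Polynomial.Chebyshev

theorem a_eq_eval_S (μ : ℝ) : ∀ n : ℕ, a μ n = (S ℝ n).eval (2 * (1 - μ))
  | 0 => by simp [a]
  | 1 => by simp [a]
  | n + 2 => by
    rw [a, a_eq_eval_S μ n, a_eq_eval_S μ (n + 1)]
    push_cast
    simp [S_add_two]

theorem a_two_mul_add_one (μ : ℝ) (n : ℕ) :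
    a μ (2 * n + 1) = 2 * a μ n * a μ (n + 1) - 2 * (1 - μ) * a μ n ^ 2 := by
  simp [a_eq_eval_S, (S_two_mul_add_one_and_S_two_mul_add_two ℝ n).1]

theorem a_two_mul_add_two (μ : ℝ) (n : ℕ) :
    a μ (2 * n + 2) = a μ (n + 1) ^ 2 - a μ n ^ 2 := by
  simp [a_eq_eval_S, (S_two_mul_add_one_and_S_two_mul_add_two ℝ n).2]

theorem a_sq_add_a_sq (μ : ℝ) (n : ℕ) :
    a μ n ^ 2 + a μ (n + 1) ^ 2 - 2 * (1 - μ) * a μ n * a μ (n + 1) = 1 := by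
  simpa [a_eq_eval_S] using congrArg (eval (2 * (1 - μ))) (S_sq_add_S_sq ℝ n)

theorem stmt11 (n : ℕ) (hn : 3 ≤ n) (hodd : Odd n) (μ : ℝ)
    (h : a μ ((n - 1) / 2) + a μ ((n - 3) / 2) = 0) :
    a μ (n - 1) = 0 ∧ a μ (n - 2) = -1 := by
  obtain ⟨m, rfl⟩ : ∃ m, n = 2 * m + 3 := by
    obtain ⟨k, rfl⟩ := hodd
    exact ⟨k - 1, by omega⟩
  have hm : a μ (m + 1) = -a μ m := by
    rw [show (2 * m + 3 - 1) / 2 = m + 1 by omega, show (2 * m + 3 - 3) / 2 = m by omega] at h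
    linarith
  rw [show 2 * m + 3 - 1 = 2 * m + 2 by omega, show 2 * m + 3 - 2 = 2 * m + 1 by omega,
    a_two_mul_add_two, a_two_mul_add_one, hm]
  constructor
  · ring
  · linear_combination -(a_sq_add_a_sq μ m) + (a μ (m + 1) - a μ m - 2 * (1 - μ) * a μ m) * hm
end

section
/- Let n ≥ 2 be even and let μ ∈ ℝ satisfy a_{n/2}(μ) + a_{n/2−1}(μ) = 0. Then a_n(μ) = 0, a_{n−1}(μ) = −1, and a_{n−2}(μ) = −2(1−μ). -/
namespace a

variable (μ : ℝ)

theorem add_two (k : ℕ) : a μ (k + 2) = 2 * (1 - μ) * a μ (k + 1) - a μ k := rfl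

theorem zero : a μ 0 = 1 := rfl

theorem one : a μ 1 = 2 * (1 - μ) := rfl

theorem add_add_two (p q : ℕ) :
    a μ (p + q + 2) = a μ (p + 1) * a μ (q + 1) - a μ p * a μ q := by
  induction q using Nat.twoStepInduction generalizing p with
  | zero => rw [add_two, zero, one]; ring
  | one =>
    rw [add_two, add_two, add_two, zero, one]
    ring
  | more q ih₁ ih₂ =>
    rw [show p + (q + 2) + 2 = p + q + 2 + 2 by omega, add_two,
      show p + q + 2 + 1 = p + (q + 1) + 2 by omega, ih₁, ih₂, add_two μ (q + 1), add_two μ q]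
    ring

theorem sq_sub_mul_eq_one (k : ℕ) : a μ (k + 1) ^ 2 - a μ (k + 2) * a μ k = 1 := by
  induction k with
  | zero => rw [add_two, zero, one]; ring
  | succ k ih =>
    rw [add_two μ (k + 1)]
    linear_combination ih + a μ (k + 2) * add_two μ k

theorem two_mul_add_two (k : ℕ) :
    a μ (2 * k + 2) = (a μ (k + 1) + a μ k) * (a μ (k + 1) - a μ k) := by
  rw [two_mul, add_add_two]
  ring

theorem two_mul_add_one (k : ℕ) :
    a μ (2 * k + 1) = 2 * a μ k * (a μ (k + 1) - (1 - μ) * a μ k) := by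
  have h₃ : a μ (2 * k + 3) = 2 * (1 - μ) * a μ (2 * k + 2) - a μ (2 * k + 1) := add_two μ _
  have h₃' : a μ (2 * k + 3) = a μ (k + 2) * a μ (k + 1) - a μ (k + 1) * a μ k := by
    rw [show 2 * k + 3 = k + 1 + k + 2 by omega, add_add_two]
  linear_combination h₃ - h₃' + 2 * (1 - μ) * two_mul_add_two μ k - a μ (k + 1) * add_two μ k

end a

theorem stmt15_general (n : ℕ) (heven : Even n) (μ : ℝ)
    (h : a μ (n / 2) + a μ (n / 2 - 1) = 0) :
    a μ n = 0 ∧ a μ (n - 1) = -1 ∧ a μ (n - 2) = -2 * (1 - μ) := by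
  obtain ⟨_ | k, rfl⟩ := heven
  · norm_num [a.zero] at h
  rw [show (k + 1 + (k + 1)) / 2 = k + 1 by omega, show k + 1 - 1 = k from rfl] at h
  have hk : a μ (k + 1) = -a μ k := by linarith
  have h_even : a μ (2 * k + 2) = 0 := by rw [a.two_mul_add_two, h, zero_mul]
  have h_odd : a μ (2 * k + 1) = -1 := by
    have cassini := a.sq_sub_mul_eq_one μ k
    rw [a.add_two, hk] at cassini
    rw [a.two_mul_add_one, hk]
    linear_combination -cassini
  have h_prev : a μ (2 * k) = -2 * (1 - μ) := by
    have := a.add_two μ (2 * k)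
    rw [h_even, h_odd] at this
    linarith
  rw [show k + 1 + (k + 1) = 2 * k + 2 by omega, show 2 * k + 2 - 1 = 2 * k + 1 by omega,
    show 2 * k + 2 - 2 = 2 * k by omega]
  exact ⟨h_even, h_odd, h_prev⟩

theorem stmt15 (n : ℕ) (hn : 2 ≤ n) (heven : Even n) (μ : ℝ)
    (h : a μ (n / 2) + a μ (n / 2 - 1) = 0) :
    a μ n = 0 ∧ a μ (n - 1) = -1 ∧ a μ (n - 2) = -2 * (1 - μ) :=
  stmt15_general n heven μ h
end
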